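/- For nonnegative integers n and a complex number a (with no zero denominators), the terminating hypergeometric sum ∑_{k=0}^n [(-n)_k (a)_k (3a+n)_k / (k! (3a/2)_k ((1+3a)/2)_k)] (3/4)^k equals (1/3)_{n/3} (2/3)_{n/3} / ((1/3+a)_{n/3} (2/3+a)_{n/3}) when 3 divides n, and equals 0 otherwise, where (x)_m denotes the rising factorial (Pochhammer symbol). -/

import Mathlib

/-!
Write `t(n, k)` for the summand and `S(n)` for the sum. Zeilberger's algorithm yields a
certificate `G(k)` (depending on `n`, vanishing at `k = 0` and `k = n + 4`) with
`(n+1)(n+2) t(n, k) - (3a+n+1)(3a+n+2) t(n+3, k) = G(k+1) - G(k)`;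
summing over `k` telescopes to `(3a+n+1)(3a+n+2) S(n+3) = (n+1)(n+2) S(n)`.
The right-hand side obeys the same first-order recurrence in steps of three, so the
identity follows by induction from `S(0) = 1` and `S(1) = S(2) = 0`.
The denominator hypothesis amounts to `3a + t ≠ 0` for `t < 2n`.
-/

open Finset

noncomputable def poch (x : ℂ) (m : ℕ) : ℂ := ∏ j ∈ Finset.range m, (x + (j : ℂ))

noncomputable def qpoch (x q : ℂ) (m : ℕ) : ℂ := ∏ i ∈ Finset.range m, (1 - x * q ^ i)

lemma poch_zero (x : ℂ) : poch x 0 = 1 := prod_range_zero _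

lemma poch_succ (x : ℂ) (k : ℕ) : poch x (k + 1) = poch x k * (x + k) := prod_range_succ _ _

lemma poch_three (x : ℂ) : poch x 3 = x * (x + 1) * (x + 2) := by
  norm_num [poch, prod_range_succ]

lemma poch_add (x : ℂ) (k l : ℕ) : poch x (k + l) = poch x k * poch (x + k) l := by
  simp only [poch, prod_range_add, Nat.cast_add, add_assoc]

lemma poch_mul_poch_add_comm (x : ℂ) (k l : ℕ) :
    poch x k * poch (x + k) l = poch x l * poch (x + l) k := by
  rw [← poch_add, ← poch_add, add_comm]

lemma poch_eq_zero_iff {x : ℂ} {m : ℕ} : poch x m = 0 ↔ ∃ j < m, x + j = 0 := by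
  simp [poch, prod_eq_zero_iff]

lemma poch_neg_natCast_eq_zero {n k : ℕ} (h : n < k) : poch (-n) k = 0 :=
  poch_eq_zero_iff.2 ⟨n, h, by ring⟩

lemma three_mul_add_ne_zero_of_poch_ne_zero {a : ℂ} {n : ℕ}
    (h₁ : poch (3 * a / 2) n ≠ 0) (h₂ : poch ((1 + 3 * a) / 2) n ≠ 0) :
    ∀ t < 2 * n, 3 * a + t ≠ 0 := by
  intro t ht hzero
  obtain ⟨j, rfl | rfl⟩ := Nat.even_or_odd' t
  · exact h₁ (poch_eq_zero_iff.2 ⟨j, by omega, by push_cast at hzero; linear_combination hzero / 2⟩)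
  · exact h₂ (poch_eq_zero_iff.2 ⟨j, by omega, by push_cast at hzero; linear_combination hzero / 2⟩)

section Andrews

variable (a : ℂ)

/-- The summand, with free numerator parameters `u, v` in place of `-n, 3a + n`. -/
noncomputable def andrewsTerm (u v : ℂ) (k : ℕ) : ℂ :=
  poch u k * poch a k * poch v k * (3 / 4) ^ k /
    ((k.factorial : ℂ) * poch (3 * a / 2) k * poch ((1 + 3 * a) / 2) k)

lemma andrewsTerm_zero (u v : ℂ) : andrewsTerm a u v 0 = 1 := by
  simp [andrewsTerm, poch_zero]

lemma andrewsTerm_succ (u v : ℂ) (k : ℕ) :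
    andrewsTerm a u v (k + 1) = andrewsTerm a u v k *
      (3 * (u + k) * (a + k) * (v + k) / ((k + 1) * (3 * a + 2 * k) * (3 * a + 2 * k + 1))) := by
  rw [andrewsTerm, andrewsTerm, poch_succ, poch_succ, poch_succ, poch_succ, poch_succ,
    show 3 * a / 2 + k = (3 * a + 2 * k) * 2⁻¹ by ring,
    show (1 + 3 * a) / 2 + k = (3 * a + 2 * k + 1) * 2⁻¹ by ring]
  simp only [Nat.factorial_succ, pow_succ, Nat.cast_mul, div_eq_mul_inv, mul_inv]
  push_cast
  ring

lemma poch_three_mul_andrewsTerm_left (u v : ℂ) (k : ℕ) :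
    poch u 3 * andrewsTerm a (u + 3) v k = poch (u + k) 3 * andrewsTerm a u v k := by
  have h := poch_mul_poch_add_comm u k 3
  push_cast at h
  simp only [andrewsTerm]
  linear_combination (poch a k * poch v k * (3 / 4) ^ k /
    ((k.factorial : ℂ) * poch (3 * a / 2) k * poch ((1 + 3 * a) / 2) k)) * h.symm

lemma poch_three_mul_andrewsTerm_right (u v : ℂ) (k : ℕ) :
    poch v 3 * andrewsTerm a u (v + 3) k = poch (v + k) 3 * andrewsTerm a u v k := by
  have h := poch_mul_poch_add_comm v k 3
  push_cast at h
  simp only [andrewsTerm]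
  linear_combination (poch u k * poch a k * (3 / 4) ^ k /
    ((k.factorial : ℂ) * poch (3 * a / 2) k * poch ((1 + 3 * a) / 2) k)) * h.symm

lemma andrewsTerm_neg_natCast_of_lt (v : ℂ) {n k : ℕ} (h : n < k) :
    andrewsTerm a (-n) v k = 0 := by
  simp [andrewsTerm, poch_neg_natCast_eq_zero h]

/-- Zeilberger's certificate for the recurrence `n ↦ n + 3`, shifted by one in `k` so that the
factor `k - m - 3` makes it vanish at `k = m + 4` without any condition on the denominators. -/
noncomputable def andrewsCert (m : ℕ) : ℕ → ℂ
  | 0 => 0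
  | j + 1 => 3 * (3 * a + 2 * m + 3) / ((3 * a + m) * (m + 3)) *
      ((j - m - 3) * (a + j) * (3 * a + m + j)) * andrewsTerm a (-(m + 3)) (3 * a + m) j

lemma andrewsCert_self_add_four (m : ℕ) : andrewsCert a m (m + 4) = 0 := by
  simp [andrewsCert]

lemma andrewsTerm_zeilberger (m k : ℕ) (hk : k ≤ m + 3) (ha : ∀ t < 2 * m + 6, 3 * a + t ≠ 0) :
    ((m : ℂ) + 1) * (m + 2) * andrewsTerm a (-m) (3 * a + m) k
      - (3 * a + m + 1) * (3 * a + m + 2) * andrewsTerm a (-(m + 3)) (3 * a + (m + 3)) k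
      = andrewsCert a m (k + 1) - andrewsCert a m k := by
  have h0 : 3 * a + m ≠ 0 := ha m (by omega)
  have h1 : 3 * a + m + 1 ≠ 0 := by simpa [add_assoc] using ha (m + 1) (by omega)
  have h2 : 3 * a + m + 2 ≠ 0 := by simpa [add_assoc] using ha (m + 2) (by omega)
  have hm : (m : ℂ) + 3 ≠ 0 := by exact_mod_cast Nat.succ_ne_zero (m + 2)
  -- both summands are rational multiples of `andrewsTerm a (-(m + 3)) (3 * a + m) k`
  have hl := poch_three_mul_andrewsTerm_left a (-(m + 3)) (3 * a + m) k
  have hr := poch_three_mul_andrewsTerm_right a (-(m + 3)) (3 * a + m) k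
  rw [show -((m : ℂ) + 3) + 3 = -m by ring] at hl
  rw [add_assoc] at hr
  rw [poch_three, poch_three] at hl hr
  rcases k with _ | j
  · simp only [andrewsTerm_zero] at hl hr
    simp only [andrewsCert, andrewsTerm_zero]
    push_cast
    linear_combination (norm := skip) (-1 / (m + 3) : ℂ) * hl - (1 / (3 * a + m)) * hr
    field_simp
    ring
  · have hj : (j : ℂ) + 1 ≠ 0 := by exact_mod_cast Nat.succ_ne_zero j
    have hd1 : 3 * a + 2 * j ≠ 0 := by exact_mod_cast ha (2 * j) (by omega)
    have hd2 : 3 * a + 2 * j + 1 ≠ 0 := by simpa [add_assoc] using ha (2 * j + 1) (by omega)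
    simp only [andrewsCert]
    rw [andrewsTerm_succ a (-(m + 3)) (3 * a + m) j] at hl hr ⊢
    push_cast at hl hr ⊢
    linear_combination (norm := skip) (-1 / (m + 3) : ℂ) * hl - (1 / (3 * a + m)) * hr
    field_simp
    ring

noncomputable def andrewsSum (n : ℕ) : ℂ :=
  ∑ k ∈ range (n + 1), andrewsTerm a (-n) (3 * a + n) k

lemma sum_range_andrewsTerm_of_lt {n N : ℕ} (h : n < N) :
    ∑ k ∈ range N, andrewsTerm a (-n) (3 * a + n) k = andrewsSum a n :=
  (sum_subset (range_subset_range.2 h) fun _ hk hk' =>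
    andrewsTerm_neg_natCast_of_lt a _ (by simp_all)).symm

lemma andrewsSum_add_three (m : ℕ) (ha : ∀ t < 2 * m + 6, 3 * a + t ≠ 0) :
    andrewsSum a (m + 3) =
      (m + 1) * (m + 2) / ((3 * a + m + 1) * (3 * a + m + 2)) * andrewsSum a m := by
  have h1 : 3 * a + m + 1 ≠ 0 := by simpa [add_assoc] using ha (m + 1) (by omega)
  have h2 : 3 * a + m + 2 ≠ 0 := by simpa [add_assoc] using ha (m + 2) (by omega)
  have hS : ∑ k ∈ range (m + 4), andrewsTerm a (-(m + 3)) (3 * a + (m + 3)) k =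
      andrewsSum a (m + 3) := by
    simp [andrewsSum]
  have htel : ∑ k ∈ range (m + 4), (((m : ℂ) + 1) * (m + 2) * andrewsTerm a (-m) (3 * a + m) k
      - (3 * a + m + 1) * (3 * a + m + 2) * andrewsTerm a (-(m + 3)) (3 * a + (m + 3)) k) = 0 := by
    rw [sum_congr rfl fun k hk =>
        andrewsTerm_zeilberger a m k (by simpa [Nat.lt_succ_iff] using hk) ha,
      sum_range_sub, andrewsCert_self_add_four, andrewsCert, sub_zero]
  rw [sum_sub_distrib, ← mul_sum, ← mul_sum, sum_range_andrewsTerm_of_lt a (by omega : m < m + 4),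
    hS] at htel
  rw [div_mul_eq_mul_div, eq_div_iff (mul_ne_zero h1 h2)]
  linear_combination -htel

lemma andrewsSum_zero : andrewsSum a 0 = 1 := by
  simp [andrewsSum, andrewsTerm_zero]

lemma andrewsSum_one (ha : ∀ t : ℕ, t < 2 → 3 * a + t ≠ 0) : andrewsSum a 1 = 0 := by
  have h0 : a ≠ 0 := by simpa using ha 0 (by omega)
  have h1 : 3 * a + 1 ≠ 0 := by simpa using ha 1 (by omega)
  simp only [andrewsSum, sum_range_succ, sum_range_zero, andrewsTerm_zero, andrewsTerm_succ]
  norm_num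
  field_simp
  ring

lemma andrewsSum_two (ha : ∀ t : ℕ, t < 4 → 3 * a + t ≠ 0) : andrewsSum a 2 = 0 := by
  have h0 : a ≠ 0 := by simpa using ha 0 (by omega)
  have h1 : 3 * a + 1 ≠ 0 := by simpa using ha 1 (by omega)
  have h2 : 3 * a + 2 ≠ 0 := by simpa using ha 2 (by omega)
  have h3 : 3 * a + 2 + 1 ≠ 0 := by convert ha 3 (by omega) using 1; push_cast; ring
  simp only [andrewsSum, sum_range_succ, sum_range_zero, andrewsTerm_zero, andrewsTerm_succ]
  norm_num
  rw [div_mul_div_comm, one_add_div (by simp [h0, h1]),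
    div_add_div _ _ (by simp [h0, h1]) (by simp [h0, h1, h2, h3]), div_eq_zero_iff]
  left
  ring

noncomputable def andrewsValue (n : ℕ) : ℂ :=
  if 3 ∣ n then
    poch (1/3) (n/3) * poch (2/3) (n/3) / (poch (1/3 + a) (n/3) * poch (2/3 + a) (n/3))
  else 0

lemma andrewsValue_add_three (m : ℕ) :
    andrewsValue a (m + 3) =
      (m + 1) * (m + 2) / ((3 * a + m + 1) * (3 * a + m + 2)) * andrewsValue a m := by
  by_cases hm : 3 ∣ m
  · obtain ⟨t, rfl⟩ := hm
    rw [andrewsValue, andrewsValue, if_pos (by omega), if_pos (by omega),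
      show (3 * t + 3) / 3 = t + 1 by omega, show 3 * t / 3 = t by omega,
      poch_succ, poch_succ, poch_succ, poch_succ]
    push_cast
    rw [show 3 * a + 3 * t + 1 = 3 * (1 / 3 + a + t) by ring,
      show 3 * a + 3 * t + 2 = 3 * (2 / 3 + a + t) by ring]
    simp only [div_eq_mul_inv, mul_inv]
    ring
  · rw [andrewsValue, andrewsValue, if_neg (by omega), if_neg hm, mul_zero]

lemma andrewsSum_eq_andrewsValue (n : ℕ) (ha : ∀ t < 2 * n, 3 * a + t ≠ 0) :
    andrewsSum a n = andrewsValue a n := by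
  induction n using Nat.strong_induction_on with
  | _ n ih =>
    match n with
    | 0 => simp [andrewsSum_zero, andrewsValue, poch_zero]
    | 1 => simp [andrewsSum_one a ha, andrewsValue]
    | 2 => simp [andrewsSum_two a ha, andrewsValue]
    | m + 3 =>
      rw [andrewsSum_add_three a m ha, andrewsValue_add_three,
        ih m (by omega) fun t ht => ha t (by omega)]

end Andrews

theorem stmt0_general (n : ℕ) (a : ℂ)
    (hden : ∀ k ≤ n, poch (3*a/2) k ≠ 0 ∧ poch ((1+3*a)/2) k ≠ 0) :
    ∑ k ∈ Finset.range (n+1),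
      poch (-(n:ℂ)) k * poch a k * poch (3*a + (n:ℂ)) k * (3/4)^k /
        ((Nat.factorial k : ℂ) * poch (3*a/2) k * poch ((1+3*a)/2) k)
    = if 3 ∣ n then
        poch (1/3) (n/3) * poch (2/3) (n/3) / (poch (1/3 + a) (n/3) * poch (2/3 + a) (n/3))
      else 0 :=
  andrewsSum_eq_andrewsValue a n
    (three_mul_add_ne_zero_of_poch_ne_zero (hden n le_rfl).1 (hden n le_rfl).2)

theorem stmt0 (n : ℕ) (a : ℂ)
    (hden : ∀ k ≤ n, poch (3*a/2) k ≠ 0 ∧ poch ((1+3*a)/2) k ≠ 0)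
    (hrhs : poch (1/3 + a) (n/3) ≠ 0 ∧ poch (2/3 + a) (n/3) ≠ 0) :
    ∑ k ∈ Finset.range (n+1),
      poch (-(n:ℂ)) k * poch a k * poch (3*a + (n:ℂ)) k * (3/4)^k /
        ((Nat.factorial k : ℂ) * poch (3*a/2) k * poch ((1+3*a)/2) k)
    = if 3 ∣ n then
        poch (1/3) (n/3) * poch (2/3) (n/3) / (poch (1/3 + a) (n/3) * poch (2/3 + a) (n/3))
      else 0 :=
  stmt0_general n a hden
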